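/- arXiv:1603.05483 — 3 statements merged into one kernel-verified Lean document; each statement's English description precedes it below -/
import Mathlib

section
/- Let γ ∈ (0,1) and ξ ∈ ℝ \ {0}. Then for all 0 ≤ N₁ < N₂, the integral ∫_{N₁}^{N₂} e^{iξt}/t^γ dt satisfies |∫_{N₁}^{N₂} e^{iξt} t^{-γ} dt| ≤ 2^γ (2/|ξ| + 1/(1-γ)) / (N₁+1)^γ. -/
/-!
On `[0, 1]` the oscillation is ignored: `∫₀¹ t^{-γ} dt = 1/(1-γ)`. On `[a, b] ⊆ [1, ∞)` one
integrates by parts against `e^{iξt}/(iξ)`; as `t^{-γ}` is positive and decreasing, the two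
boundary terms and its total variation contribute at most `2a^{-γ}/|ξ|` together. The weight
`(N₁ + 1)^{-γ}` is then absorbed using `N₁ + 1 ≤ 2 max N₁ 1`.
-/

open MeasureTheory Real Filter Topology

theorem hasDerivAt_cexp_mul_div {c : ℂ} (hc : c ≠ 0) (x : ℝ) :
    HasDerivAt (fun t : ℝ => Complex.exp (c * t) / c) (Complex.exp (c * x)) x := by
  have h : HasDerivAt (fun t : ℝ => c * (t : ℂ)) c x := by
    simpa using (Complex.ofRealCLM.hasDerivAt (x := x)).const_mul c
  simpa [hc] using h.cexp.div_const c

theorem norm_cexp_I_mul_ofReal_mul_ofReal (ξ t : ℝ) : ‖Complex.exp (Complex.I * ξ * t)‖ = 1 := by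
  rw [mul_assoc, ← Complex.ofReal_mul, Complex.norm_exp_I_mul_ofReal]

theorem norm_integral_cexp_mul_le_of_deriv_nonpos {u u' : ℝ → ℝ} {a b ξ : ℝ} (hξ : ξ ≠ 0)
    (hab : a ≤ b) (hu : ∀ x ∈ Set.Icc a b, HasDerivAt u (u' x) x)
    (hu'int : IntervalIntegrable u' volume a b) (hu'_nonpos : ∀ x ∈ Set.Icc a b, u' x ≤ 0)
    (hub : 0 ≤ u b) :
    ‖∫ t in a..b, Complex.exp (Complex.I * ξ * t) * (u t : ℂ)‖ ≤ 2 * u a / |ξ| := by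
  set c : ℂ := Complex.I * ξ
  have hc : c ≠ 0 := mul_ne_zero Complex.I_ne_zero (Complex.ofReal_ne_zero.2 hξ)
  have hv_norm (t : ℝ) : ‖Complex.exp (c * t) / c‖ = 1 / |ξ| := by
    simp [c, norm_cexp_I_mul_ofReal_mul_ofReal]
  have hu_uIcc : ∀ x ∈ Set.uIcc a b, HasDerivAt u (u' x) x := by
    rwa [Set.uIcc_of_le hab]
  have hvariation : u a - u b = ∫ t in a..b, -u' t := by
    rw [intervalIntegral.integral_neg, intervalIntegral.integral_eq_sub_of_hasDerivAt hu_uIcc hu'int]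
    ring
  have hua : u b ≤ u a := by
    have : 0 ≤ ∫ t in a..b, -u' t :=
      intervalIntegral.integral_nonneg hab fun t ht => neg_nonneg.2 (hu'_nonpos t ht)
    linarith
  have hparts : ∫ t in a..b, Complex.exp (c * t) * (u t : ℂ) =
      u b * (Complex.exp (c * b) / c) - u a * (Complex.exp (c * a) / c) -
        ∫ t in a..b, (u' t : ℂ) * (Complex.exp (c * t) / c) := by
    simp_rw [mul_comm (Complex.exp _)]
    exact intervalIntegral.integral_mul_deriv_eq_deriv_mul
      (fun x hx => (hu_uIcc x hx).ofReal_comp) (fun x _ => hasDerivAt_cexp_mul_div hc x)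
      ⟨hu'int.1.ofReal, hu'int.2.ofReal⟩ (Continuous.intervalIntegrable (by fun_prop) a b)
  have hrest : ‖∫ t in a..b, (u' t : ℂ) * (Complex.exp (c * t) / c)‖ ≤ (u a - u b) / |ξ| := by
    rw [hvariation, ← intervalIntegral.integral_div]
    refine intervalIntegral.norm_integral_le_of_norm_le hab (ae_of_all _ fun t ht => ?_)
      (hu'int.neg.div_const _)
    rw [norm_mul, hv_norm, Complex.norm_real, Real.norm_eq_abs,
      abs_of_nonpos (hu'_nonpos t (Set.Ioc_subset_Icc_self ht)), mul_one_div]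
  have hboundary (x : ℝ) (hx : 0 ≤ u x) : ‖(u x : ℂ) * (Complex.exp (c * x) / c)‖ = u x / |ξ| := by
    rw [norm_mul, hv_norm, Complex.norm_of_nonneg hx, mul_one_div]
  calc ‖∫ t in a..b, Complex.exp (c * t) * (u t : ℂ)‖
      ≤ ‖(u b : ℂ) * (Complex.exp (c * b) / c)‖ + ‖(u a : ℂ) * (Complex.exp (c * a) / c)‖ +
          ‖∫ t in a..b, (u' t : ℂ) * (Complex.exp (c * t) / c)‖ := by
        rw [hparts]
        exact (norm_sub_le _ _).trans (add_le_add_left (norm_sub_le _ _) _)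
    _ ≤ u b / |ξ| + u a / |ξ| + (u a - u b) / |ξ| := by
        rw [hboundary b hub, hboundary a (hub.trans hua)]
        gcongr
    _ = 2 * u a / |ξ| := by ring

theorem intervalIntegrable_cexp_mul_rpow_neg {γ : ℝ} (hγ : γ < 1) (ξ a b : ℝ) :
    IntervalIntegrable (fun t : ℝ => Complex.exp (Complex.I * ξ * t) * ((t ^ (-γ) : ℝ) : ℂ))
      volume a b := by
  have h := intervalIntegral.intervalIntegrable_rpow' (a := a) (b := b) (by linarith : -1 < -γ)
  exact IntervalIntegrable.continuousOn_mul ⟨h.1.ofReal, h.2.ofReal⟩ (by fun_prop)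

theorem norm_integral_cexp_mul_rpow_neg_le {γ ξ a b : ℝ} (hγ : 0 ≤ γ) (hξ : ξ ≠ 0)
    (ha : 0 < a) (hab : a ≤ b) :
    ‖∫ t in a..b, Complex.exp (Complex.I * ξ * t) * ((t ^ (-γ) : ℝ) : ℂ)‖ ≤ 2 * a ^ (-γ) / |ξ| := by
  have hpos : ∀ x ∈ Set.Icc a b, 0 < x := fun x hx => ha.trans_le hx.1
  refine norm_integral_cexp_mul_le_of_deriv_nonpos (u' := fun x => -γ * x ^ (-γ - 1)) hξ hab
    (fun x hx => Real.hasDerivAt_rpow_const (Or.inl (hpos x hx).ne')) ?_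
    (fun x hx => ?_) (rpow_nonneg (ha.le.trans hab) _)
  · refine ContinuousOn.intervalIntegrable fun x hx => ?_
    rw [Set.uIcc_of_le hab] at hx
    exact ((continuousAt_rpow_const x _ (Or.inl (hpos x hx).ne')).const_mul _).continuousWithinAt
  · have := rpow_nonneg (hpos x hx).le (-γ - 1)
    nlinarith

theorem norm_integral_cexp_mul_rpow_neg_le_one_div {γ : ℝ} (hγ : γ < 1) (ξ : ℝ) {a b : ℝ}
    (ha : 0 ≤ a) (hab : a ≤ b) (hb : b ≤ 1) :
    ‖∫ t in a..b, Complex.exp (Complex.I * ξ * t) * ((t ^ (-γ) : ℝ) : ℂ)‖ ≤ 1 / (1 - γ) := by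
  have hγ' : 0 < 1 - γ := by linarith
  calc ‖∫ t in a..b, Complex.exp (Complex.I * ξ * t) * ((t ^ (-γ) : ℝ) : ℂ)‖
      ≤ ∫ t in a..b, t ^ (-γ) := by
        refine intervalIntegral.norm_integral_le_of_norm_le hab (ae_of_all _ fun t ht => ?_)
          (intervalIntegral.intervalIntegrable_rpow' (by linarith))
        rw [norm_mul, norm_cexp_I_mul_ofReal_mul_ofReal, one_mul,
          Complex.norm_of_nonneg (rpow_nonneg (ha.trans ht.1.le) _)]
    _ = (b ^ (1 - γ) - a ^ (1 - γ)) / (1 - γ) := by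
        rw [integral_rpow (Or.inl (by linarith)), neg_add_eq_sub]
    _ ≤ 1 / (1 - γ) := by
        gcongr
        linarith [rpow_le_one (ha.trans hab) hb hγ'.le, rpow_nonneg ha (1 - γ)]

theorem norm_integral_cexp_mul_rpow_neg_le_uniform {γ ξ a b : ℝ} (hγ₀ : 0 ≤ γ) (hγ₁ : γ < 1)
    (hξ : ξ ≠ 0) (ha : 0 ≤ a) (hab : a ≤ b) :
    ‖∫ t in a..b, Complex.exp (Complex.I * ξ * t) * ((t ^ (-γ) : ℝ) : ℂ)‖ ≤
      2 / |ξ| + 1 / (1 - γ) := by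
  have hξ' : 0 ≤ 2 / |ξ| := by positivity
  have hγ' : 0 ≤ 1 / (1 - γ) := one_div_nonneg.2 (by linarith)
  have htail {a' : ℝ} (ha' : 1 ≤ a') (hab' : a' ≤ b) :
      ‖∫ t in a'..b, Complex.exp (Complex.I * ξ * t) * ((t ^ (-γ) : ℝ) : ℂ)‖ ≤ 2 / |ξ| := by
    refine (norm_integral_cexp_mul_rpow_neg_le hγ₀ hξ (by linarith) hab').trans ?_
    gcongr
    exact mul_le_of_le_one_right zero_le_two (rpow_le_one_of_one_le_of_nonpos ha' (by linarith))
  rcases le_total b 1 with hb | hb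
  · linarith [norm_integral_cexp_mul_rpow_neg_le_one_div hγ₁ ξ ha hab hb]
  rcases le_total 1 a with ha₁ | ha₁
  · linarith [htail ha₁ hab]
  rw [← intervalIntegral.integral_add_adjacent_intervals
    (intervalIntegrable_cexp_mul_rpow_neg hγ₁ ξ a 1) (intervalIntegrable_cexp_mul_rpow_neg hγ₁ ξ 1 b)]
  refine (norm_add_le _ _).trans ?_
  linarith [norm_integral_cexp_mul_rpow_neg_le_one_div hγ₁ ξ ha ha₁ le_rfl, htail le_rfl hb]

theorem one_le_two_rpow_div_add_one_rpow {x γ : ℝ} (hx₀ : 0 ≤ x) (hx₁ : x ≤ 1) (hγ : 0 ≤ γ) :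
    1 ≤ 2 ^ γ / (x + 1) ^ γ := by
  rw [← div_rpow zero_le_two (by linarith)]
  exact one_le_rpow ((one_le_div (by linarith)).2 (by linarith)) hγ

theorem rpow_neg_le_two_rpow_div_add_one_rpow {x γ : ℝ} (hx : 1 ≤ x) (hγ : 0 ≤ γ) :
    x ^ (-γ) ≤ 2 ^ γ / (x + 1) ^ γ := by
  have hx₀ : 0 < x := by linarith
  rw [rpow_neg hx₀.le, ← inv_rpow hx₀.le, ← div_rpow zero_le_two (by linarith)]
  refine rpow_le_rpow (by positivity) ?_ hγ
  rw [inv_eq_one_div, div_le_div_iff₀ hx₀ (by linarith)]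
  linarith

theorem oscillatory_integral_bound (γ ξ : ℝ) (hγ : γ ∈ Set.Ioo (0:ℝ) 1) (hξ : ξ ≠ 0)
    (N₁ N₂ : ℝ) (hN₁ : 0 ≤ N₁) (hN : N₁ < N₂) :
    ‖∫ t in N₁..N₂, Complex.exp (Complex.I * (ξ : ℂ) * (t : ℂ)) * ((t ^ (-γ) : ℝ) : ℂ)‖ ≤
      (2:ℝ) ^ γ * (2 / |ξ| + 1 / (1 - γ)) / (N₁ + 1) ^ γ := by
  obtain ⟨hγ₀, hγ₁⟩ := hγ
  have hC : 0 ≤ 1 / (1 - γ) := one_div_nonneg.2 (by linarith)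
  rcases le_total 1 N₁ with h₁ | h₁
  · calc _ ≤ 2 * N₁ ^ (-γ) / |ξ| := norm_integral_cexp_mul_rpow_neg_le hγ₀.le hξ (by linarith) hN.le
      _ ≤ 2 * (2 ^ γ / (N₁ + 1) ^ γ) / |ξ| := by
          gcongr; exact rpow_neg_le_two_rpow_div_add_one_rpow h₁ hγ₀.le
      _ = 2 ^ γ / (N₁ + 1) ^ γ * (2 / |ξ|) := by ring
      _ ≤ 2 ^ γ / (N₁ + 1) ^ γ * (2 / |ξ| + 1 / (1 - γ)) := by gcongr; linarith
      _ = _ := by ring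
  · calc _ ≤ 2 / |ξ| + 1 / (1 - γ) :=
          norm_integral_cexp_mul_rpow_neg_le_uniform hγ₀.le hγ₁ hξ hN₁ hN.le
      _ ≤ 2 ^ γ / (N₁ + 1) ^ γ * (2 / |ξ| + 1 / (1 - γ)) :=
          le_mul_of_one_le_left (by positivity) (one_le_two_rpow_div_add_one_rpow hN₁ h₁ hγ₀.le)
      _ = _ := by ring
end

section
/- For β > 0 and γ ∈ (1/2, 1), the integral ∫₀^{(2β)^{1/γ}} √(β²/t^{2γ} − 1/4) dt equals ((2β)^{1/γ}/(4γ)) · B(3/2, (1−γ)/(2γ)), where B is the Euler beta function. -/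
/-!
Rescaling `t = (2β)^(1/γ) s` turns the integrand into `½ √(s^(-2γ) - 1)`, and the substitution
`s = u^(1/(2γ))` turns that into the Beta integrand `u^((1-γ)/(2γ) - 1) (1 - u)^(1/2)` times
`1/(2γ)`. Past the turning point the radicand is negative and `Real.sqrt` returns `0`, so the
integrals over `[0, 1]` may be replaced by integrals over `(0, ∞)`, where the power substitution
`integral_comp_rpow_Ioi` holds without any integrability side conditions.
-/

open MeasureTheory Real Set ProbabilityTheory

lemma intervalIntegral_eq_integral_Ioi_of_eq_zero {E : Type*} [NormedAddCommGroup E]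
    [NormedSpace ℝ E] {f : ℝ → E} {a b : ℝ} (hab : a ≤ b) (hf : ∀ x, b < x → f x = 0) :
    ∫ x in a..b, f x = ∫ x in Ioi a, f x := by
  rw [intervalIntegral.integral_of_le hab,
    setIntegral_eq_of_subset_of_forall_sdiff_eq_zero measurableSet_Ioi Ioc_subset_Ioi_self]
  rintro x ⟨hxa, hxb⟩
  exact hf x (lt_of_not_ge fun hx => hxb ⟨hxa, hx⟩)

lemma integral_rpow_mul_one_sub_rpow_eq_beta {α β : ℝ} (hα : 0 < α) (hβ : 0 < β) :
    ∫ x in (0:ℝ)..1, x ^ (α - 1) * (1 - x) ^ (β - 1) = beta α β := by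
  rw [beta_eq_betaIntegralReal α β hα hβ, Complex.betaIntegral,
    ← Complex.ofReal_re (∫ x in (0:ℝ)..1, _), ← intervalIntegral.integral_ofReal]
  congr 1
  refine intervalIntegral.integral_congr fun x hx => ?_
  rw [uIcc_of_le zero_le_one] at hx
  rw [Complex.ofReal_mul, Complex.ofReal_cpow hx.1, Complex.ofReal_cpow (sub_nonneg.2 hx.2)]
  norm_cast

lemma ProbabilityTheory.beta_comm (α β : ℝ) : beta α β = beta β α := by
  rw [beta, beta, mul_comm, add_comm]

lemma integral_sqrt_rpow_neg_sub_one {p : ℝ} (hp : 0 < p) (hp2 : p < 2) :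
    ∫ s in (0:ℝ)..1, √(s ^ (-p) - 1) = 1 / p * beta (1 / p - 1 / 2) (3 / 2) := by
  have hinv : ∀ u : ℝ, 0 < u → (u ^ (1 / p)) ^ (-p) = u⁻¹ := fun u hu => by
    rw [← rpow_mul hu.le, show 1 / p * -p = -1 by field_simp, rpow_neg_one]
  calc ∫ s in (0:ℝ)..1, √(s ^ (-p) - 1)
      = ∫ s in Ioi 0, √(s ^ (-p) - 1) := by
        refine intervalIntegral_eq_integral_Ioi_of_eq_zero zero_le_one fun s hs => ?_
        have : s ^ (-p) < 1 := rpow_lt_one_of_one_lt_of_neg hs (neg_lt_zero.2 hp)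
        exact sqrt_eq_zero_of_nonpos (by linarith)
    _ = ∫ u in Ioi 0, (1 / p * u ^ (1 / p - 1)) • √((u ^ (1 / p)) ^ (-p) - 1) :=
        (integral_comp_rpow_Ioi_of_pos (by positivity)).symm
    _ = ∫ u in (0:ℝ)..1, (1 / p * u ^ (1 / p - 1)) • √((u ^ (1 / p)) ^ (-p) - 1) := by
        refine (intervalIntegral_eq_integral_Ioi_of_eq_zero zero_le_one fun u hu => ?_).symm
        have : u⁻¹ < 1 := inv_lt_one_of_one_lt₀ hu
        rw [hinv u (by linarith), sqrt_eq_zero_of_nonpos (by linarith), smul_zero]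
    _ = ∫ u in (0:ℝ)..1, 1 / p * (u ^ (1 / p - 1 / 2 - 1) * (1 - u) ^ ((3 / 2 : ℝ) - 1)) := by
        refine intervalIntegral.integral_congr_ae (ae_of_all _ fun u hu => ?_)
        rw [uIoc_of_le zero_le_one] at hu
        obtain ⟨hu0, hu1⟩ := hu
        rw [hinv u hu0, smul_eq_mul, show (3 / 2 : ℝ) - 1 = 1 / 2 by norm_num,
          show 1 / p - 1 / 2 - 1 = (1 / p - 1) - 1 / 2 by ring,
          rpow_sub hu0 (1 / p - 1) (1 / 2),
          ← sqrt_eq_rpow, ← sqrt_eq_rpow, show u⁻¹ - 1 = (1 - u) / u by field_simp,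
          sqrt_div (by linarith)]
        ring
    _ = 1 / p * beta (1 / p - 1 / 2) (3 / 2) := by
        rw [intervalIntegral.integral_const_mul,
          integral_rpow_mul_one_sub_rpow_eq_beta (by rw [sub_pos, one_div_lt_one_div] <;> linarith)
            (by norm_num)]

theorem turning_point_beta_integral (β γ : ℝ) (hβ : 0 < β)
    (hγ : γ ∈ Set.Ioo (1/2 : ℝ) 1) :
    (∫ t in (0:ℝ)..((2*β) ^ (1/γ)), Real.sqrt (β^2 / t ^ (2*γ) - 1/4)) =
      ((2*β) ^ (1/γ) / (4*γ)) *
        (Real.Gamma (3/2) * Real.Gamma ((1-γ)/(2*γ)) / Real.Gamma (3/2 + (1-γ)/(2*γ))) := by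
  obtain ⟨hγ_gt, hγ_lt⟩ := hγ
  have hγ0 : 0 < γ := by linarith
  set a := (2 * β) ^ (1 / γ) with ha_def
  have ha : 0 < a := by positivity
  have ha_rpow : a ^ (2 * γ) = 4 * β ^ 2 := by
    rw [ha_def, ← rpow_mul (by positivity), show 1 / γ * (2 * γ) = 2 by field_simp, rpow_two]
    ring
  have hrescale : ∀ s : ℝ, 0 < s → √(β ^ 2 / (a * s) ^ (2 * γ) - 1 / 4) =
      1 / 2 * √(s ^ (-(2 * γ)) - 1) := fun s hs => by
    rw [show β ^ 2 / (a * s) ^ (2 * γ) - 1 / 4 = (1 / 2) ^ 2 * (s ^ (-(2 * γ)) - 1) by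
        rw [mul_rpow ha.le hs.le, ha_rpow, rpow_neg hs.le]; field_simp; ring,
      sqrt_mul (by positivity), sqrt_sq (by norm_num)]
  show _ = a / (4 * γ) * beta (3 / 2) ((1 - γ) / (2 * γ))
  calc ∫ t in (0:ℝ)..a, √(β ^ 2 / t ^ (2 * γ) - 1 / 4)
      = a * ∫ s in (0:ℝ)..1, √(β ^ 2 / (a * s) ^ (2 * γ) - 1 / 4) := by
        rw [intervalIntegral.integral_comp_mul_left (fun t => √(β ^ 2 / t ^ (2 * γ) - 1 / 4))
          ha.ne', mul_zero, mul_one, smul_eq_mul, mul_inv_cancel_left₀ ha.ne']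
    _ = a * ∫ s in (0:ℝ)..1, 1 / 2 * √(s ^ (-(2 * γ)) - 1) := by
        congr 1
        refine intervalIntegral.integral_congr_ae (ae_of_all _ fun s hs => ?_)
        rw [uIoc_of_le zero_le_one] at hs
        exact hrescale s hs.1
    _ = a / (4 * γ) * beta (3 / 2) ((1 - γ) / (2 * γ)) := by
        rw [intervalIntegral.integral_const_mul,
          integral_sqrt_rpow_neg_sub_one (by positivity) (by linarith),
          beta_comm, show (1 - γ) / (2 * γ) = 1 / (2 * γ) - 1 / 2 by field_simp]
        field_simp
        ring
end

section
/- Laplace-type integral estimate: Let c₀ > 0 and Z₀ > 0. Then for all z ≥ Z₀, the expression exp(−(4c₀/3) z^{3/2}) ∫_{Z₀}^z exp((4c₀/3) s^{3/2}) ds/(2s) is O(z^{−3/2}) as z → +∞; in particular it is bounded by a constant times z^{−3/2} uniformly for z ≥ Z₀. -/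
open MeasureTheory Real Filter Topology

private lemma cube_div_le_exp {x : ℝ} (hx : 0 ≤ x) : x^3 / 27 ≤ Real.exp x := by
  have h1 : x/3 ≤ Real.exp (x/3) := by
    have := Real.add_one_le_exp (x/3); linarith
  have h0 : (0:ℝ) ≤ x/3 := by linarith
  have h2 : (x/3)^3 ≤ (Real.exp (x/3))^3 := pow_le_pow_left₀ h0 h1 3
  have h3 : (Real.exp (x/3))^3 = Real.exp x := by
    rw [← Real.exp_nat_mul]; congr 1; push_cast; ring
  calc x^3/27 = (x/3)^3 := by ring
    _ ≤ (Real.exp (x/3))^3 := h2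
    _ = Real.exp x := h3

set_option maxHeartbeats 1000000 in
/-- Laplace-type estimate: the weighted integral
`exp(−(4c₀/3) z^{3/2}) ∫_{Z₀}^z exp((4c₀/3) s^{3/2}) ds/(2s)` is `O(z^{−3/2})`
uniformly for `z ≥ Z₀`. -/
theorem laplace_weighted_integral_bound (c₀ Z₀ : ℝ) (hc : 0 < c₀) (hZ : 0 < Z₀) :
    ∃ C : ℝ, 0 < C ∧ ∀ z ≥ Z₀,
      Real.exp (-(4*c₀/3) * z ^ ((3:ℝ)/2)) *
        (∫ s in Z₀..z, Real.exp ((4*c₀/3) * s ^ ((3:ℝ)/2)) / (2*s)) ≤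
      C * z ^ (-(3:ℝ)/2) := by
  set p : ℝ := (3:ℝ)/2 with hp
  set a : ℝ := 4*c₀/3 with ha
  have hap : 0 < a := by rw [ha]; positivity
  have hp0 : 0 < p := by rw [hp]; norm_num
  have hap2 : a * p = 2*c₀ := by rw [ha, hp]; ring
  have h2p : (0:ℝ) < (2:ℝ)^p := Real.rpow_pos_of_pos (by norm_num) p
  set δ : ℝ := 1 - (2:ℝ)^(-p) with hδdef
  have hδ : 0 < δ := by
    have h1 : (2:ℝ)^(-p) < (2:ℝ)^(0:ℝ) :=
      Real.rpow_lt_rpow_of_exponent_lt (by norm_num) (by linarith)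
    rw [Real.rpow_zero] at h1
    rw [hδdef]; linarith
  set B : ℝ := a * δ with hB
  have hBpos : 0 < B := mul_pos hap hδ
  set t₀ : ℝ := Z₀ ^ p with ht₀def
  have ht₀ : 0 < t₀ := Real.rpow_pos_of_pos hZ p
  set K₁ : ℝ := 27*(t₀+1)/(t₀^2 * B^3 * (4*Z₀)) with hK₁
  have hK₁pos : 0 < K₁ := by rw [hK₁]; positivity
  set C : ℝ := (2*Z₀)^p + K₁ + (2:ℝ)^p/(4*c₀) + 1 with hC
  have hCpos : 0 < C := by
    have : 0 < (2*Z₀)^p := Real.rpow_pos_of_pos (by linarith) p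
    rw [hC]; positivity
  refine ⟨C, hCpos, ?_⟩
  intro z hz
  have hz0 : 0 < z := lt_of_lt_of_le hZ hz
  have hzp : 0 < z ^ p := Real.rpow_pos_of_pos hz0 p
  have hzneg : z ^ (-(3:ℝ)/2) = (z ^ p)⁻¹ := by
    rw [show (-(3:ℝ)/2) = -p by rw [hp]; ring, Real.rpow_neg hz0.le]
  rw [hzneg]
  -- continuity of the integrand
  have hgc : ContinuousOn (fun s => Real.exp (a * s ^ p) / (2*s)) (Set.Ici Z₀) := by
    apply ContinuousOn.div
    · exact Real.continuous_exp.comp_continuousOn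
        (continuousOn_const.mul (ContinuousOn.rpow_const continuousOn_id
          (fun s hs => Or.inl (ne_of_gt (lt_of_lt_of_le hZ hs)))))
    · exact (continuous_const.mul continuous_id).continuousOn
    · intro s hs
      have : 0 < s := lt_of_lt_of_le hZ hs
      positivity
  have hInt : ∀ u v : ℝ, Z₀ ≤ u → u ≤ v →
      IntervalIntegrable (fun s => Real.exp (a * s ^ p) / (2*s)) volume u v := by
    intro u v hu huv
    apply ContinuousOn.intervalIntegrable
    apply hgc.mono
    rw [Set.uIcc_of_le huv]
    exact Set.Icc_subset_Ici_self.trans (Set.Ici_subset_Ici.mpr hu)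
  rcases le_or_gt z (2*Z₀) with hcase | hcase
  · -- Case A : Z₀ ≤ z ≤ 2Z₀
    have hmono : (∫ s in Z₀..z, Real.exp (a * s ^ p) / (2*s)) ≤
        (z - Z₀) * (Real.exp (a * z ^ p) / (2*Z₀)) := by
      have h1 : (∫ s in Z₀..z, Real.exp (a * s ^ p) / (2*s)) ≤
          ∫ _s in Z₀..z, Real.exp (a * z ^ p) / (2*Z₀) := by
        apply intervalIntegral.integral_mono_on hz (hInt Z₀ z le_rfl hz)
          (intervalIntegrable_const)
        intro s hs
        obtain ⟨hs1, hs2⟩ := hs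
        have hs0 : 0 < s := lt_of_lt_of_le hZ hs1
        apply div_le_div₀ (Real.exp_pos _).le
        · exact Real.exp_le_exp.mpr (mul_le_mul_of_nonneg_left
            (Real.rpow_le_rpow (le_of_lt hs0) hs2 hp0.le) hap.le)
        · positivity
        · linarith
      rwa [intervalIntegral.integral_const, smul_eq_mul] at h1
    have hEneg : 0 < Real.exp (-a * z ^ p) := Real.exp_pos _
    calc Real.exp (-a * z ^ p) * (∫ s in Z₀..z, Real.exp (a * s ^ p) / (2*s))
        ≤ Real.exp (-a * z ^ p) * ((z - Z₀) * (Real.exp (a * z ^ p) / (2*Z₀))) :=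
          mul_le_mul_of_nonneg_left hmono hEneg.le
      _ = (z - Z₀) / (2*Z₀) := by
          rw [neg_mul, Real.exp_neg]
          field_simp
      _ ≤ 1/2 := by rw [div_le_div_iff₀ (by linarith) (by norm_num)]; linarith
      _ ≤ C * (z ^ p)⁻¹ := by
          have h2 : z ^ p ≤ (2*Z₀) ^ p :=
            Real.rpow_le_rpow hz0.le hcase hp0.le
          have h3 : z ^ p ≤ C := by
            have h6 : (0:ℝ) < (2:ℝ)^p/(4*c₀) := by positivity
            rw [hC]; linarith
          
          have h4 : (0:ℝ) < (z ^ p)⁻¹ := by positivity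
          have h5 : z ^ p * (z ^ p)⁻¹ = 1 := mul_inv_cancel₀ (ne_of_gt hzp)
          nlinarith [mul_le_mul_of_nonneg_right h3 h4.le]
  · -- Case B : 2Z₀ < z
    set m : ℝ := z/2 with hm
    have hZm : Z₀ ≤ m := by rw [hm]; linarith
    have hmz : m ≤ z := by rw [hm]; linarith
    have hm0 : 0 < m := lt_of_lt_of_le hZ hZm
    have hmp : m ^ p = z ^ p / 2 ^ p := by
      rw [hm, Real.div_rpow hz0.le (by norm_num : (0:ℝ) ≤ 2)]
    have hmppos : 0 < m ^ p := Real.rpow_pos_of_pos hm0 p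
    have hsplit : (∫ s in Z₀..z, Real.exp (a * s ^ p) / (2*s)) =
        (∫ s in Z₀..m, Real.exp (a * s ^ p) / (2*s)) +
        (∫ s in m..z, Real.exp (a * s ^ p) / (2*s)) :=
      (intervalIntegral.integral_add_adjacent_intervals (hInt Z₀ m le_rfl hZm)
        (hInt m z hZm hmz)).symm
    have hI1 : (∫ s in Z₀..m, Real.exp (a * s ^ p) / (2*s)) ≤
        (m - Z₀) * (Real.exp (a * m ^ p) / (2*Z₀)) := by
      have h1 : (∫ s in Z₀..m, Real.exp (a * s ^ p) / (2*s)) ≤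
          ∫ _s in Z₀..m, Real.exp (a * m ^ p) / (2*Z₀) := by
        apply intervalIntegral.integral_mono_on hZm (hInt Z₀ m le_rfl hZm)
          (intervalIntegrable_const)
        intro s hs
        obtain ⟨hs1, hs2⟩ := hs
        have hs0 : 0 < s := lt_of_lt_of_le hZ hs1
        apply div_le_div₀ (Real.exp_pos _).le
        · exact Real.exp_le_exp.mpr (mul_le_mul_of_nonneg_left
            (Real.rpow_le_rpow (le_of_lt hs0) hs2 hp0.le) hap.le)
        · positivity
        · linarith
      rwa [intervalIntegral.integral_const, smul_eq_mul] at h1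
    -- derivative of F(y) = exp(a y^p)
    have hD : ∀ x ∈ Set.uIcc m z, HasDerivAt (fun y => Real.exp (a * y ^ p))
        (Real.exp (a * x ^ p) * (a * (p * x ^ (p-1)))) x := by
      intro x hx
      rw [Set.uIcc_of_le hmz] at hx
      have hx0 : 0 < x := lt_of_lt_of_le hm0 hx.1
      exact ((Real.hasDerivAt_rpow_const (Or.inl hx0.ne')).const_mul a).exp
    have hDint : IntervalIntegrable
        (fun x => Real.exp (a * x ^ p) * (a * (p * x ^ (p-1)))) volume m z := by
      apply ContinuousOn.intervalIntegrable
      have hDc : ContinuousOn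
          (fun x => Real.exp (a * x ^ p) * (a * (p * x ^ (p-1)))) (Set.Ici Z₀) := by
        apply ContinuousOn.mul
        · exact Real.continuous_exp.comp_continuousOn
            (continuousOn_const.mul (ContinuousOn.rpow_const continuousOn_id
              (fun s hs => Or.inl (ne_of_gt (lt_of_lt_of_le hZ hs)))))
        · exact continuousOn_const.mul (continuousOn_const.mul
            (ContinuousOn.rpow_const continuousOn_id
              (fun s hs => Or.inl (ne_of_gt (lt_of_lt_of_le hZ hs)))))
      apply hDc.mono
      rw [Set.uIcc_of_le hmz]
      exact Set.Icc_subset_Ici_self.trans (Set.Ici_subset_Ici.mpr hZm)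
    have hFTC : (∫ x in m..z, Real.exp (a * x ^ p) * (a * (p * x ^ (p-1)))) =
        Real.exp (a * z ^ p) - Real.exp (a * m ^ p) :=
      intervalIntegral.integral_eq_sub_of_hasDerivAt hD hDint
    set k : ℝ := 1/(4*c₀*m^p) with hk
    have hkpos : 0 < k := by rw [hk]; positivity
    have hI2 : (∫ s in m..z, Real.exp (a * s ^ p) / (2*s)) ≤
        k * Real.exp (a * z ^ p) := by
      have h1 : (∫ s in m..z, Real.exp (a * s ^ p) / (2*s)) ≤
          ∫ s in m..z, k * (Real.exp (a * s ^ p) * (a * (p * s ^ (p-1)))) := by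
        apply intervalIntegral.integral_mono_on hmz (hInt m z hZm hmz)
          (hDint.const_mul k)
        intro s hs
        obtain ⟨hs1, hs2⟩ := hs
        have hs0 : 0 < s := lt_of_lt_of_le hm0 hs1
        have hE : 0 < Real.exp (a * s ^ p) := Real.exp_pos _
        have hkey : m ^ p ≤ s ^ p := Real.rpow_le_rpow hm0.le hs1 hp0.le
        have hspe : s ^ (p-1) * s = s ^ p := by
          nth_rewrite 2 [show s = s ^ (1:ℝ) from (Real.rpow_one s).symm]
          rw [← Real.rpow_add hs0]; norm_num
        have hsp1 : 0 ≤ s ^ (p-1) := (Real.rpow_pos_of_pos hs0 _).le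
        rw [hk, one_div, ← div_eq_inv_mul,
          div_le_div_iff₀ (by positivity) (by positivity)]
        have heq : Real.exp (a * s ^ p) * (a * (p * s ^ (p-1))) * (2*s)
            = (2*c₀) * (2 * (Real.exp (a * s ^ p) * (s ^ (p-1) * s))) := by
          rw [← hap2]; ring
        rw [heq, hspe]
        have h9 := mul_le_mul_of_nonneg_left hkey
          (show (0:ℝ) ≤ 4*c₀*Real.exp (a*s^p) by positivity)
        calc Real.exp (a * s ^ p) * (4*c₀*m^p)
            = 4*c₀*Real.exp (a*s^p) * m^p := by ring
          _ ≤ 4*c₀*Real.exp (a*s^p) * s^p := h9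
          _ = 2*c₀ * (2 * (Real.exp (a*s^p) * s^p)) := by ring
      rw [intervalIntegral.integral_const_mul, hFTC] at h1
      have h2 : 0 < Real.exp (a * m ^ p) := Real.exp_pos _
      have h3 : 0 < k * Real.exp (a * m ^ p) := mul_pos hkpos h2
      linarith [h1]
    have hEneg : 0 < Real.exp (-a * z ^ p) := Real.exp_pos _
    have hterm2 : Real.exp (-a * z ^ p) * (k * Real.exp (a * z ^ p)) = k := by
      rw [neg_mul, Real.exp_neg]
      field_simp
    have hkval : k = ((2:ℝ)^p/(4*c₀)) * (z ^ p)⁻¹ := by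
      rw [hk, hmp]
      field_simp
    have hterm1 : Real.exp (-a * z ^ p) * ((m - Z₀) * (Real.exp (a * m ^ p) / (2*Z₀)))
        ≤ K₁ * (z ^ p)⁻¹ := by
      set t : ℝ := z ^ p with ht
      have htt : t₀ ≤ t := by
        rw [ht, ht₀def]; exact Real.rpow_le_rpow hZ.le hz hp0.le
      have ht1 : 0 < t := hzp
      have hzt : z ≤ 1 + t := by
        rcases le_or_gt z 1 with h | h
        · linarith
        · have h2 : z ^ (1:ℝ) ≤ z ^ p :=
            Real.rpow_le_rpow_of_exponent_le h.le (by rw [hp]; norm_num)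
          rw [Real.rpow_one] at h2; rw [ht]; linarith
      have hcomb : Real.exp (-a * t) * Real.exp (a * m ^ p) = Real.exp (-(B * t)) := by
        rw [← Real.exp_add]
        congr 1
        rw [hmp, hB, hδdef, Real.rpow_neg (by norm_num : (0:ℝ) ≤ 2)]
        field_simp
        ring
      have hBt : 0 ≤ B * t := (mul_pos hBpos ht1).le
      have hX : 0 < Real.exp (-(B*t)) := Real.exp_pos _
      have hE3 : Real.exp (-(B*t)) * (B*t)^3 ≤ 27 := by
        have h1 : Real.exp (-(B*t)) * ((B*t)^3/27) ≤
            Real.exp (-(B*t)) * Real.exp (B*t) :=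
          mul_le_mul_of_nonneg_left (cube_div_le_exp hBt) hX.le
        have h2 : Real.exp (-(B*t)) * Real.exp (B*t) = 1 := by
          rw [Real.exp_neg]; exact inv_mul_cancel₀ (Real.exp_ne_zero _)
        rw [h2] at h1; linarith
      calc Real.exp (-a * t) * ((m - Z₀) * (Real.exp (a * m ^ p) / (2*Z₀)))
          = (Real.exp (-a * t) * Real.exp (a * m ^ p)) * ((m - Z₀)/(2*Z₀)) := by ring
        _ = Real.exp (-(B*t)) * ((m - Z₀)/(2*Z₀)) := by rw [hcomb]
        _ ≤ Real.exp (-(B*t)) * (z/(4*Z₀)) := by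
            apply mul_le_mul_of_nonneg_left _ hX.le
            rw [div_le_div_iff₀ (by linarith) (by linarith), hm]
            nlinarith [mul_pos hZ hZ]
        _ ≤ K₁ * t⁻¹ := by
            rw [show K₁ * t⁻¹ = K₁ / t from (div_eq_mul_inv _ _).symm,
              show Real.exp (-(B*t)) * (z/(4*Z₀)) = (Real.exp (-(B*t))*z)/(4*Z₀) from
                by ring,
              div_le_div_iff₀ (by linarith) ht1]
            have hK4 : K₁ * (4*Z₀) = 27*(t₀+1)/(t₀^2*B^3) := by
              rw [hK₁]; field_simp
            rw [hK4, le_div_iff₀ (by positivity)]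
            have hXB : (0:ℝ) ≤ Real.exp (-(B*t)) * B^3 := by positivity
            have hA1 : Real.exp (-(B*t)) * B^3 * (t*t₀^2) ≤ 27 := by
              have h0 : t₀^2 ≤ t^2 := pow_le_pow_left₀ ht₀.le htt 2
              have h1 : t*t₀^2 ≤ t^3 := by
                calc t*t₀^2 ≤ t*t^2 := mul_le_mul_of_nonneg_left h0 ht1.le
                  _ = t^3 := by ring
              calc Real.exp (-(B*t)) * B^3 * (t*t₀^2)
                  ≤ Real.exp (-(B*t)) * B^3 * t^3 := mul_le_mul_of_nonneg_left h1 hXB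
                _ = Real.exp (-(B*t)) * (B*t)^3 := by ring
                _ ≤ 27 := hE3
            have hA2 : Real.exp (-(B*t)) * B^3 * (t^2*t₀^2) ≤ 27*t₀ := by
              have h1 : t^2*t₀^2 ≤ t^3*t₀ := by
                have h2 := mul_le_mul_of_nonneg_left htt
                  (show (0:ℝ) ≤ t^2*t₀ by positivity)
                calc t^2*t₀^2 = t^2*t₀*t₀ := by ring
                  _ ≤ t^2*t₀*t := h2
                  _ = t^3*t₀ := by ring
              calc Real.exp (-(B*t)) * B^3 * (t^2*t₀^2)
                  ≤ Real.exp (-(B*t)) * B^3 * (t^3*t₀) := mul_le_mul_of_nonneg_left h1 hXB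
                _ = (Real.exp (-(B*t)) * (B*t)^3) * t₀ := by ring
                _ ≤ 27 * t₀ := mul_le_mul_of_nonneg_right hE3 ht₀.le
            have h8 := mul_le_mul_of_nonneg_left hzt
              (show (0:ℝ) ≤ Real.exp (-(B*t))*B^3*(t*t₀^2) by positivity)
            calc Real.exp (-(B*t)) * z * t * (t₀^2*B^3)
                = Real.exp (-(B*t))*B^3*(t*t₀^2) * z := by ring
              _ ≤ Real.exp (-(B*t))*B^3*(t*t₀^2) * (1+t) := h8
              _ = Real.exp (-(B*t))*B^3*(t*t₀^2)
                  + Real.exp (-(B*t))*B^3*(t^2*t₀^2) := by ring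
              _ ≤ 27 + 27*t₀ := add_le_add hA1 hA2
              _ = 27*(t₀+1) := by ring
    rw [hsplit, mul_add]
    refine le_trans (add_le_add (mul_le_mul_of_nonneg_left hI1 hEneg.le)
      (mul_le_mul_of_nonneg_left hI2 hEneg.le)) ?_
    refine le_trans (add_le_add hterm1 (le_of_eq (hterm2.trans hkval))) ?_
    have h6 : 0 < (2*Z₀)^p := Real.rpow_pos_of_pos (by linarith) p
    have h7 : (0:ℝ) < (z^p)⁻¹ := by positivity
    have h8 : K₁ + (2:ℝ)^p/(4*c₀) ≤ C := by
      rw [hC]; linarith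
    calc K₁ * (z^p)⁻¹ + ((2:ℝ)^p/(4*c₀)) * (z^p)⁻¹
        = (K₁ + (2:ℝ)^p/(4*c₀)) * (z^p)⁻¹ := by ring
      _ ≤ C * (z^p)⁻¹ := mul_le_mul_of_nonneg_right h8 h7.le
end
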